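/- Let M be a finite regular left duo monoid, K a field, and e, f idempotents of M such that Me is not contained in Mf. Let V be a simple KG_e-module and W a simple KG_f-module, each regarded as a KM-module by inflation along φ_e and φ_f respectively. Then Ext^n_{KM}(V, W) = 0 for all n ≥ 0. -/

import Mathlib

/-!
Let `I ⊆ M` be the set of `m` with `e ∉ Mm`; it is a two-sided ideal (left duo), it contains `f`
since `Me ⊄ Mf`, and `φ_e` kills it. Because `M` is regular, every `m ∈ I` is fixed on the right
by an idempotent of `I`, and idempotents `g, h` of a left duo monoid satisfy `ghg = gh`. This lets
one build inductively an element `ε` of the ideal `J` of `KM` spanned by `I` with `xε = x` for all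
`x ∈ J`; in particular `εaε = εa` for all `a ∈ KM`, `φ_e(ε) = 0` and `φ_f(ε) = φ_f(fε) = 1`.

So `ε` kills `V` and acts as the identity on `W`. The left ideal `KM(1 - ε)` is projective and
killed by `ε`, so `V` has a projective resolution by sums of copies of it, and there are no nonzero
maps from a module killed by `ε` to `W`.
-/

open CategoryTheory

namespace CategoryTheory

variable {C : Type*} [Category C] [Abelian C]

lemma ShortComplex.Exact.epi_comp_comp_mono {S : ShortComplex C} (hS : S.Exact) {X Y : C}
    {p : X ⟶ S.X₁} {i : S.X₃ ⟶ Y} (hp : Epi p) (hi : Mono i) {f : X ⟶ S.X₂} {g : S.X₂ ⟶ Y}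
    (hf : f = p ≫ S.f) (hg : g = S.g ≫ i) (zero : f ≫ g = 0) :
    (ShortComplex.mk f g zero).Exact := by
  subst hf hg
  let S' := ShortComplex.mk S.f (S.g ≫ i) (by simp)
  have hS' : S'.Exact := (exact_iff_of_epi_of_isIso_of_mono (S₁ := S) (S₂ := S')
    { τ₁ := 𝟙 _, τ₂ := 𝟙 _, τ₃ := i }).1 hS
  exact (exact_iff_of_epi_of_isIso_of_mono (S₁ := ShortComplex.mk _ _ zero) (S₂ := S')
    { τ₁ := p, τ₂ := 𝟙 _, τ₃ := 𝟙 _ }).2 hS'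

namespace ProjectiveResolution

section Splice

variable {T P : ℕ → C} (ι : ∀ n, T (n + 1) ⟶ P n) (π : ∀ n, P n ⟶ T n)
  (w : ∀ n, ι n ≫ π n = 0)

def splice : ChainComplex C ℕ :=
  ChainComplex.of P (fun n => π (n + 1) ≫ ι n) fun n => by
    simp [reassoc_of% w (n + 1)]

lemma splice_d (n : ℕ) : (splice ι π w).d (n + 1) n = π (n + 1) ≫ ι n := by
  simp [splice]

variable {ι π w}

lemma splice_exactAt_succ (hS : ∀ n, (ShortComplex.mk (ι n) (π n) (w n)).ShortExact) (n : ℕ) :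
    (splice ι π w).ExactAt (n + 1) := by
  rw [HomologicalComplex.exactAt_iff' _ (n + 2) (n + 1) n (by simp) (by simp)]
  exact (hS (n + 1)).exact.epi_comp_comp_mono (hS (n + 2)).epi_g (hS n).mono_f
    (splice_d ..) (splice_d ..) _

variable (ι π) in
noncomputable def ofShortExact [∀ n, Projective (P n)]
    (hS : ∀ n, (ShortComplex.mk (ι n) (π n) (w n)).ShortExact) : ProjectiveResolution (T 0) :=
  have hπ0 : (splice ι π w).d 1 0 ≫ π 0 = 0 := by
    rw [splice_d]
    show (π 1 ≫ ι 0) ≫ π 0 = 0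
    simp [w 0]
  { complex := splice ι π w
    projective n := inferInstanceAs (Projective (P n))
    π := (ChainComplex.toSingle₀Equiv _ _).symm ⟨π 0, hπ0⟩
    quasiIso := ⟨fun n => by
      cases n with
      | zero =>
        rw [ChainComplex.quasiIsoAt₀_iff, ShortComplex.quasiIso_iff_of_zeros']
        · have hπ : ((HomologicalComplex.shortComplexFunctor' C _ 1 0 0).map
              (((splice ι π w).toSingle₀Equiv (T 0)).symm ⟨π 0, hπ0⟩)).τ₂ = π 0 :=
            ChainComplex.toSingle₀Equiv_symm_apply_f_zero _ hπ0
          refine ⟨(hS 0).exact.epi_comp_comp_mono (hS 1).epi_g (inferInstance : Mono (𝟙 (T 0)))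
            (splice_d ι π w 0) (by rw [hπ]; simp) _, ?_⟩
          rw [hπ]
          exact (hS 0).epi_g
        all_goals rfl
      | succ n =>
        rw [quasiIsoAt_iff_exactAt']
        · exact splice_exactAt_succ hS n
        · apply ChainComplex.exactAt_succ_single_obj⟩ }

end Splice

lemma isZero_Ext_of_subsingleton_hom {R : Type*} [Ring R] [Linear R C] [EnoughProjectives C]
    {X Y : C} (P : ProjectiveResolution X) (h : ∀ n, Subsingleton (P.complex.X n ⟶ Y)) (n : ℕ) :
    Limits.IsZero (((Ext R C n).obj (Opposite.op X)).obj Y) := by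
  refine Limits.IsZero.of_iso ?_ (P.isoExt n Y)
  rw [← HomologicalComplex.exactAt_iff_isZero_homology, HomologicalComplex.exactAt_iff]
  have := h n
  exact ShortComplex.exact_of_isZero_X₂ _
    (ModuleCat.isZero_of_subsingleton (ModuleCat.of R (P.complex.X n ⟶ Y)))

end ProjectiveResolution

end CategoryTheory

lemma ModuleCat.subsingleton_hom_of_isTorsionBy {A : Type*} [Ring A] {ε : A} {X Y : ModuleCat A}
    (hX : Module.IsTorsionBy A X ε) (hY : Module.IsTorsionBy A Y (1 - ε)) :
    Subsingleton (X ⟶ Y) := by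
  refine ⟨fun f g => ?_⟩
  suffices ∀ h : X ⟶ Y, h = 0 by rw [this f, this g]
  intro h
  ext x
  have hεhx := hY (x := h x)
  rw [sub_smul, one_smul, sub_eq_zero] at hεhx
  calc h x = ε • h x := hεhx
    _ = 0 := by rw [← map_smul, hX, map_zero]

namespace SemicentralIdempotent

variable {A : Type} [Ring A] {ε : A}

lemma isTorsionBy_span_one_sub (hε : ∀ a : A, ε * a * ε = ε * a) :
    Module.IsTorsionBy A (Submodule.span A {1 - ε}) ε := by
  rintro ⟨p, hp⟩
  obtain ⟨a, rfl⟩ := Submodule.mem_span_singleton.mp hp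
  ext
  simp [mul_sub, ← mul_assoc, hε]

lemma projective_span_one_sub (hε : IsIdempotentElem ε) :
    Module.Projective A (Submodule.span A {1 - ε}) := by
  refine .of_split (Submodule.span A {1 - ε}).subtype
    ((LinearMap.toSpanSingleton A A (1 - ε)).codRestrict _
      fun a => Submodule.mem_span_singleton.2 ⟨a, rfl⟩) ?_
  ext ⟨p, hp⟩
  obtain ⟨a, rfl⟩ := Submodule.mem_span_singleton.mp hp
  simp only [LinearMap.coe_comp, Function.comp_apply, Submodule.coe_subtype,
    LinearMap.codRestrict_apply, LinearMap.toSpanSingleton_apply, smul_eq_mul, LinearMap.id_coe,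
    id_eq]
  rw [mul_assoc, hε.one_sub.eq]

lemma isTorsionBy_dfinsupp (hε : ∀ a : A, ε * a * ε = ε * a) (X : Type) :
    Module.IsTorsionBy A (Π₀ _ : X, Submodule.span A {1 - ε}) ε := by
  intro d
  ext x : 1
  simpa using isTorsionBy_span_one_sub hε (x := d x)

variable (ε) in
open scoped Classical in
noncomputable def cover (X : Type) [AddCommGroup X] [Module A X] :
    (Π₀ _ : X, Submodule.span A {1 - ε}) →ₗ[A] X :=
  DFinsupp.lsum ℕ fun x => LinearMap.toSpanSingleton A X x ∘ₗ (Submodule.span A {1 - ε}).subtype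

open scoped Classical in
lemma cover_surjective {X : Type} [AddCommGroup X] [Module A X]
    (hX : Module.IsTorsionBy A X ε) : Function.Surjective (cover ε X) := by
  intro x
  refine ⟨DFinsupp.single x ⟨1 - ε, Submodule.mem_span_singleton_self _⟩, ?_⟩
  simp [cover, sub_smul, hX]

variable (ε) in
noncomputable def syzygy (X : Type) [AddCommGroup X] [Module A X] : ℕ → ModuleCat A
  | 0 => ModuleCat.of A X
  | n + 1 => ModuleCat.of A (LinearMap.ker (cover ε (syzygy X n)))

lemma isTorsionBy_syzygy (hε : ∀ a : A, ε * a * ε = ε * a) {X : Type} [AddCommGroup X]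
    [Module A X] (hX : Module.IsTorsionBy A X ε) : ∀ n, Module.IsTorsionBy A (syzygy ε X n) ε
  | 0 => hX
  | _ + 1 => fun x => Subtype.ext (isTorsionBy_dfinsupp hε _ (x := x.1))

noncomputable def projectiveResolution (hε : ∀ a : A, ε * a * ε = ε * a) {X : Type}
    [AddCommGroup X] [Module A X] (hX : Module.IsTorsionBy A X ε) :
    ProjectiveResolution (ModuleCat.of A X) :=
  haveI := projective_span_one_sub (ε := ε) (show ε * ε = ε by simpa using hε 1)
  ProjectiveResolution.ofShortExact (T := syzygy ε X)
    (P := fun n => ModuleCat.of A (Π₀ _ : syzygy ε X n, Submodule.span A {1 - ε}))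
    (fun _ => ModuleCat.ofHom (LinearMap.ker _).subtype) (fun _ => ModuleCat.ofHom (cover ε _))
    (fun n => LinearMap.shortExact_shortComplexKer (cover_surjective (isTorsionBy_syzygy hε hX n)))

theorem isZero_Ext (K : Type*) [Field K] [Algebra K A] (hε : ∀ a : A, ε * a * ε = ε * a)
    {X Y : Type} [AddCommGroup X] [Module A X] [AddCommGroup Y] [Module A Y]
    (hX : Module.IsTorsionBy A X ε) (hY : Module.IsTorsionBy A Y (1 - ε)) (n : ℕ) :
    Limits.IsZero (((Ext K (ModuleCat A) n).obj (Opposite.op (ModuleCat.of A X))).obj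
      (ModuleCat.of A Y)) :=
  (projectiveResolution hε hX).isZero_Ext_of_subsingleton_hom
    (fun _ => ModuleCat.subsingleton_hom_of_isTorsionBy (isTorsionBy_dfinsupp hε _) hY) n

end SemicentralIdempotent

lemma Ideal.mul_eq_self_of_mem_span {R : Type*} [Ring R] {S : Set R} {ε x : R}
    (hS : ∀ s ∈ S, s * ε = s) (hx : x ∈ Ideal.span S) : x * ε = x := by
  induction hx using Submodule.span_induction with
  | mem x hx => exact hS x hx
  | zero => exact zero_mul ε
  | add x y _ _ hx hy => rw [add_mul, hx, hy]
  | smul a x _ hx => rw [smul_eq_mul, mul_assoc, hx]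

theorem exists_mem_span_mul_eq_self {R : Type*} [Ring R] (S : Finset R)
    (hS : ∀ g ∈ S, ∀ h ∈ S, g * h * g = g * h) :
    ∃ ε ∈ Ideal.span (S : Set R), ∀ x : R, (∃ g ∈ S, x * g = x) → x * ε = x := by
  classical
  induction S using Finset.induction_on with
  | empty => exact ⟨0, zero_mem _, by simp⟩
  | insert h S hhS ih =>
    obtain ⟨ε, hεS, hε⟩ := ih fun g hg k hk =>
      hS g (Finset.mem_insert_of_mem hg) k (Finset.mem_insert_of_mem hk)
    have hspan : Ideal.span (S : Set R) ≤ Ideal.span (insert h S : Finset R) :=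
      Ideal.span_mono (by simp)
    have hh : h ∈ Ideal.span (insert h S : Finset R) := Ideal.subset_span (by simp)
    -- `x ↦ x * (ε + h - h * ε)` fixes `x` if `x` is fixed by `h`, or if `x` and `x * h` are
    -- both fixed by `ε`
    refine ⟨ε + h - h * ε, sub_mem (add_mem (hspan hεS) hh) (Ideal.mul_mem_left _ h (hspan hεS)),
      ?_⟩
    rintro x ⟨g, hg, hxg⟩
    have expand : x * (ε + h - h * ε) = x * ε + x * h - x * h * ε := by noncomm_ring
    rcases Finset.mem_insert.mp hg with rfl | hgS
    · rw [expand, hxg]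
      abel
    · have hxhg : x * h * g = x * h := by
        calc x * h * g = x * g * h * g := by rw [hxg]
          _ = x * (g * h * g) := by simp only [mul_assoc]
          _ = x * h := by rw [hS g hg h (Finset.mem_insert_self h S), ← mul_assoc, hxg]
      rw [expand, hε x ⟨g, hgS, hxg⟩, hε (x * h) ⟨g, hgS, hxhg⟩]
      abel

section Monoid

variable {M : Type*} [Monoid M]

lemma IsIdempotentElem.mul_mul_self_of_leftDuo (hld : ∀ m x : M, ∃ y, m * x = y * m)
    {g : M} (hg : IsIdempotentElem g) (m : M) : g * m * g = g * m := by
  obtain ⟨y, hy⟩ := hld g m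
  rw [hy, mul_assoc, hg.eq]

lemma exists_isIdempotentElem_mul_eq_self (hreg : ∀ a : M, ∃ x, a * x * a = a) {I : Set M}
    (hIl : ∀ m ∈ I, ∀ x, x * m ∈ I) {m : M} (hm : m ∈ I) :
    ∃ g ∈ I, IsIdempotentElem g ∧ m * g = m := by
  obtain ⟨y, hy⟩ := hreg m
  refine ⟨y * m, hIl m hm y, ?_, by rw [← mul_assoc, hy]⟩
  show y * m * (y * m) = y * m
  rw [← mul_assoc, mul_assoc y, mul_assoc y, hy]

end Monoid

namespace MonoidAlgebra

variable {k M : Type*} [Ring k] [Monoid M] {I : Set M}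

lemma mem_ideal_span_of_image_iff (hIl : ∀ m ∈ I, ∀ x, x * m ∈ I) {x : MonoidAlgebra k M} :
    x ∈ Ideal.span (of k M '' I) ↔ ↑x.coeff.support ⊆ I := by
  rw [mem_ideal_span_of_image]
  refine ⟨fun h m hm => ?_, fun h m hm => ⟨m, h hm, 1, (one_mul m).symm⟩⟩
  obtain ⟨m', hm', d, rfl⟩ := h m hm
  exact hIl m' hm' d

lemma isTwoSided_ideal_span_of_image (hIl : ∀ m ∈ I, ∀ x, x * m ∈ I)
    (hIr : ∀ m ∈ I, ∀ x, m * x ∈ I) : (Ideal.span (of k M '' I)).IsTwoSided := by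
  classical
  refine ⟨fun b hx => ?_⟩
  rw [mem_ideal_span_of_image_iff hIl] at hx ⊢
  intro m hm
  obtain ⟨u, hu, v, -, rfl⟩ := Finset.mem_mul.mp (support_coeff_mul_subset _ b hm)
  exact hIr u (hx hu) v

theorem exists_mem_ideal_span_of_image_mul_eq_self [Fintype M]
    (hreg : ∀ a : M, ∃ x, a * x * a = a) (hld : ∀ m x : M, ∃ y, m * x = y * m)
    (hIl : ∀ m ∈ I, ∀ x, x * m ∈ I) (hIr : ∀ m ∈ I, ∀ x, m * x ∈ I) :
    ∃ ε ∈ Ideal.span (of k M '' I),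
      (∀ m ∈ I, of k M m * ε = of k M m) ∧ ∀ a, ε * a * ε = ε * a := by
  classical
  let E : Finset M := Finset.univ.filter fun g => g ∈ I ∧ IsIdempotentElem g
  obtain ⟨ε, hεE, hε⟩ := exists_mem_span_mul_eq_self (E.image (of k M)) <| by
    simp only [Finset.mem_image, Finset.mem_filter, forall_exists_index, and_imp, E]
    rintro _ g - - hg rfl _ h - - - rfl
    rw [← map_mul, ← map_mul, hg.mul_mul_self_of_leftDuo hld]
  have hεI : ε ∈ Ideal.span (of k M '' I) :=
    Ideal.span_mono (by
      rw [Finset.coe_image]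
      exact Set.image_mono fun g hg => (Finset.mem_filter.mp hg).2.1) hεE
  have hfix : ∀ m ∈ I, of k M m * ε = of k M m := by
    intro m hm
    obtain ⟨g, hgI, hg, hmg⟩ := exists_isIdempotentElem_mul_eq_self hreg hIl hm
    exact hε _ ⟨of k M g,
      Finset.mem_image_of_mem _ (Finset.mem_filter.mpr ⟨Finset.mem_univ _, hgI, hg⟩), by
        rw [← map_mul, hmg]⟩
  have := isTwoSided_ideal_span_of_image (k := k) hIl hIr
  refine ⟨ε, hεI, hfix, fun a => Ideal.mul_eq_self_of_mem_span ?_ (Ideal.mul_mem_right a _ hεI)⟩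
  rintro _ ⟨m, hm, rfl⟩
  exact hfix m hm

end MonoidAlgebra

theorem stmt_15_general (M : Type) [Monoid M] [Fintype M] (K : Type) [Field K]
    (hreg : ∀ a : M, ∃ x : M, a * x * a = a)
    (hld : ∀ m x : M, ∃ y : M, m * x = y * m)
    (e f : M) (hf : IsIdempotentElem f)
    (hnle : ¬ {x : M | ∃ a : M, x = a * e} ⊆ {x : M | ∃ a : M, x = a * f})
    (Ge : Type) [Group Ge] (ιe : Ge → M)
    (hmule : ∀ g h : Ge, ιe (g * h) = ιe g * ιe h)
    (honee : ιe 1 = e)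
    (Gf : Type) [Group Gf] (ιf : Gf → M)
    (honef : ιf 1 = f)
    (φe : MonoidAlgebra K M →ₐ[K] MonoidAlgebra K Ge)
    (hφe0 : ∀ m : M, (¬ ∃ g : Ge, ιe g = e * m) → φe (MonoidAlgebra.of K M m) = 0)
    (φf : MonoidAlgebra K M →ₐ[K] MonoidAlgebra K Gf)
    (hφf1 : ∀ (m : M) (g : Gf), ιf g = f * m →
      φf (MonoidAlgebra.of K M m) = MonoidAlgebra.of K Gf g)
    (V W : Type) [AddCommGroup V] [Module (MonoidAlgebra K Ge) V]
    [AddCommGroup W] [Module (MonoidAlgebra K Gf) W] :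
    letI : Module (MonoidAlgebra K M) V := Module.compHom V φe.toRingHom
    letI : Module (MonoidAlgebra K M) W := Module.compHom W φf.toRingHom
    let EM : ℕ → ModuleCat K := fun n =>
      ((Ext K (ModuleCat (MonoidAlgebra K M)) n).obj
        (Opposite.op (ModuleCat.of (MonoidAlgebra K M) V))).obj
        (ModuleCat.of (MonoidAlgebra K M) W)
    ∀ n : ℕ, Subsingleton ↥(EM n) := by
  intro _ n
  set I : Set M := {m | ¬ ∃ a, e = a * m}
  have hIl : ∀ m ∈ I, ∀ x, x * m ∈ I := fun m hm x ⟨a, ha⟩ => hm ⟨a * x, by rw [ha, mul_assoc]⟩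
  have hIr : ∀ m ∈ I, ∀ x, m * x ∈ I := fun m hm x ⟨a, ha⟩ => by
    obtain ⟨y, hy⟩ := hld m x
    exact hm ⟨a * y, by rw [ha, hy, mul_assoc]⟩
  have hfI : f ∈ I := fun ⟨a, ha⟩ => hnle fun x ⟨b, hb⟩ => ⟨b * a, by rw [hb, ha, mul_assoc]⟩
  obtain ⟨ε, hεI, hεfix, hε⟩ :=
    MonoidAlgebra.exists_mem_ideal_span_of_image_mul_eq_self (k := K) hreg hld hIl hIr
  have hφeε : φe ε = 0 := by
    refine (Ideal.span_le (I := RingHom.ker φe)).2 ?_ hεI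
    rintro _ ⟨m, hm, rfl⟩
    refine hφe0 m fun ⟨g, hg⟩ => hm ⟨ιe g⁻¹ * e, ?_⟩
    rw [mul_assoc, ← hg, ← hmule, inv_mul_cancel, honee]
  have hφfε : φf ε = 1 := by
    have hφff : φf (MonoidAlgebra.of K M f) = 1 := by rw [hφf1 f 1 (by rw [honef, hf.eq]), map_one]
    have h := congrArg φf (hεfix f hfI)
    rwa [map_mul, hφff, one_mul] at h
  let : Module (MonoidAlgebra K M) V := Module.compHom V φe.toRingHom
  let : Module (MonoidAlgebra K M) W := Module.compHom W φf.toRingHom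
  exact ModuleCat.subsingleton_of_isZero (SemicentralIdempotent.isZero_Ext K hε
    (fun v => show φe ε • v = (0 : V) by rw [hφeε, zero_smul])
    (fun w => show φf (1 - ε) • w = (0 : W) by rw [map_sub, map_one, hφfε, sub_self, zero_smul]) n)

/-- Let `M` be a finite regular left duo monoid, `K` a field, and `e, f`
idempotents of `M` with `Me ⊄ Mf`.  Let `G_e`, `G_f` be the unit groups of `eMe`, `fMf`
(presented as abstract finite groups with multiplicative injections `ιe : Ge → M`,
`ιf : Gf → M`), and let `V` be a simple `KG_e`-module and `W` a simple `KG_f`-module, viewed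
as `KM`-modules by inflation along `φ_e`, `φ_f`.  Then `Ext^n_{KM}(V, W) = 0` for all
`n ≥ 0`. -/
theorem stmt_15 (M : Type) [Monoid M] [Fintype M] (K : Type) [Field K]
    (hreg : ∀ a : M, ∃ x : M, a * x * a = a)
    (hld : ∀ m x : M, ∃ y : M, m * x = y * m)
    (e f : M) (he : IsIdempotentElem e) (hf : IsIdempotentElem f)
    (hnle : ¬ {x : M | ∃ a : M, x = a * e} ⊆ {x : M | ∃ a : M, x = a * f})
    (Ge : Type) [Group Ge] [Fintype Ge] (ιe : Ge → M)
    (hinje : Function.Injective ιe)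
    (hmule : ∀ g h : Ge, ιe (g * h) = ιe g * ιe h)
    (honee : ιe 1 = e)
    (hrangee : Set.range ιe =
      {x : M | e * x * e = x ∧ ∃ y : M, e * y * e = y ∧ x * y = e ∧ y * x = e})
    (Gf : Type) [Group Gf] [Fintype Gf] (ιf : Gf → M)
    (hinjf : Function.Injective ιf)
    (hmulf : ∀ g h : Gf, ιf (g * h) = ιf g * ιf h)
    (honef : ιf 1 = f)
    (hrangef : Set.range ιf =
      {x : M | f * x * f = x ∧ ∃ y : M, f * y * f = y ∧ x * y = f ∧ y * x = f})
    (φe : MonoidAlgebra K M →ₐ[K] MonoidAlgebra K Ge)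
    (hφe1 : ∀ (m : M) (g : Ge), ιe g = e * m →
      φe (MonoidAlgebra.of K M m) = MonoidAlgebra.of K Ge g)
    (hφe0 : ∀ m : M, (¬ ∃ g : Ge, ιe g = e * m) → φe (MonoidAlgebra.of K M m) = 0)
    (φf : MonoidAlgebra K M →ₐ[K] MonoidAlgebra K Gf)
    (hφf1 : ∀ (m : M) (g : Gf), ιf g = f * m →
      φf (MonoidAlgebra.of K M m) = MonoidAlgebra.of K Gf g)
    (hφf0 : ∀ m : M, (¬ ∃ g : Gf, ιf g = f * m) → φf (MonoidAlgebra.of K M m) = 0)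
    (V W : Type) [AddCommGroup V] [Module (MonoidAlgebra K Ge) V]
    [AddCommGroup W] [Module (MonoidAlgebra K Gf) W]
    (hV : IsSimpleModule (MonoidAlgebra K Ge) V)
    (hW : IsSimpleModule (MonoidAlgebra K Gf) W) :
    letI : Module (MonoidAlgebra K M) V := Module.compHom V φe.toRingHom
    letI : Module (MonoidAlgebra K M) W := Module.compHom W φf.toRingHom
    let EM : ℕ → ModuleCat K := fun n =>
      ((Ext K (ModuleCat (MonoidAlgebra K M)) n).obj
        (Opposite.op (ModuleCat.of (MonoidAlgebra K M) V))).obj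
        (ModuleCat.of (MonoidAlgebra K M) W)
    ∀ n : ℕ, Subsingleton ↥(EM n) :=
  stmt_15_general M K hreg hld e f hf hnle Ge ιe hmule honee Gf ιf honef φe hφe0 φf hφf1 V W
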